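/- arXiv:2508.13824 — 4 statements merged into one kernel-verified Lean document; each statement's English description precedes it below -/
import Mathlib

section
/- Suppose u_n ∈ ℝ^D and vectors q̂_0,…,q̂_N, F_0,…,F_N ∈ ℝ^D satisfy the local DG predictor system Σ_{q=0}^{N} κ_{pq} q̂_q = ψ_p u_n + w_p F_p for every p. Then the value of the local solution at the right endpoint equals the quadrature update of the ADER-DG method: Σ_{p=0}^{N} ψ̃_p q̂_p = u_n + Σ_{p=0}^{N} w_p F_p. -/
/-!
The Lagrange basis is a partition of unity, so `∑ p ψ_p = 1`, `∑ p ψ̃_p = 1` and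
`∑ p φ_p' = 0`. Hence the column sums of `κ` are `∑ p κ_{pq} = ψ̃_q`, and summing the
predictor system over `p` turns its left side into `∑ q ψ̃_q q̂_q` and its right side into
`u_n + ∑ p w_p F_p`.
-/

open Polynomial

namespace Lagrange

variable {F ι : Type*} [Field F] [DecidableEq ι] {s : Finset ι} {v : ι → F}

theorem eval_basis_eq_prod (i : ι) (x : F) :
    (Lagrange.basis s v i).eval x = ∏ j ∈ s.erase i, (x - v j) / (v i - v j) := by
  simp [Lagrange.basis, eval_prod, basisDivisor, div_eq_inv_mul, mul_comm]

theorem sum_eval_basis (hvs : Set.InjOn v s) (hs : s.Nonempty) (x : F) :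
    ∑ i ∈ s, (Lagrange.basis s v i).eval x = 1 := by
  rw [← eval_finsetSum, sum_basis hvs hs, eval_one]

theorem sum_derivative_basis (hvs : Set.InjOn v s) (hs : s.Nonempty) :
    ∑ i ∈ s, derivative (Lagrange.basis s v i) = 0 := by
  rw [← derivative_sum, sum_basis hvs hs, derivative_one]

end Lagrange

theorem Polynomial.sum_integral_eval_mul_eq_zero {ι : Type*} {s : Finset ι} {Q : ι → ℝ[X]}
    (hQ : ∑ i ∈ s, Q i = 0) {g : ℝ → ℝ} (hg : Continuous g) (a b : ℝ) :
    ∑ i ∈ s, ∫ x in a..b, (Q i).eval x * g x = 0 := by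
  rw [← intervalIntegral.integral_finsetSum
    fun i _ => (by fun_prop : Continuous fun x => (Q i).eval x * g x).intervalIntegrable a b]
  simp only [← Finset.sum_mul, ← eval_finsetSum, hQ, eval_zero, zero_mul,
    intervalIntegral.integral_zero]

theorem Finset.sum_sum_smul_comm {ι R M : Type*} [Fintype ι] [Semiring R] [AddCommMonoid M]
    [Module R M] (κ : Matrix ι ι R) (x : ι → M) :
    ∑ p, ∑ q, κ p q • x q = ∑ q, (∑ p, κ p q) • x q := by
  rw [Finset.sum_comm]
  simp only [Finset.sum_smul]

theorem aderdg_right_endpoint_eq_quadrature_update_general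
    (N D : ℕ) (τ : Fin (N + 1) → ℝ) (hτ : Function.Injective τ)
    (φ : Fin (N + 1) → ℝ → ℝ)
    (hφ : ∀ p x, φ p x = ∏ k ∈ Finset.univ.erase p, (x - τ k) / (τ p - τ k))
    (ψ ψt w : Fin (N + 1) → ℝ)
    (hψ : ∀ p, ψ p = φ p 0) (hψt : ∀ p, ψt p = φ p 1)
    (κ : Matrix (Fin (N + 1)) (Fin (N + 1)) ℝ)
    (hκ : ∀ p q, κ p q = ψt p * ψt q - ∫ x in (0:ℝ)..1, deriv (φ p) x * φ q x)
    (u : Fin D → ℝ) (qhat F : Fin (N + 1) → Fin D → ℝ)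
    (hsys : ∀ p, ∑ q, κ p q • qhat q = ψ p • u + w p • F p) :
    ∑ p, ψt p • qhat p = u + ∑ p, w p • F p := by
  set P : Fin (N + 1) → ℝ[X] := Lagrange.basis Finset.univ τ
  have hφP : ∀ p, φ p = fun x => (P p).eval x :=
    fun p => funext fun x => by rw [hφ, Lagrange.eval_basis_eq_prod]
  have hunity : ∀ x, ∑ p, φ p x = 1 := fun x => by
    simpa only [hφP] using Lagrange.sum_eval_basis hτ.injOn Finset.univ_nonempty x
  have hcol : ∀ q, ∑ p, κ p q = ψt q := by
    intro q
    have hstiff : ∑ p, ∫ x in (0:ℝ)..1, deriv (φ p) x * φ q x = 0 := by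
      simp only [hφP, Polynomial.deriv]
      exact sum_integral_eval_mul_eq_zero
        (Lagrange.sum_derivative_basis hτ.injOn Finset.univ_nonempty) (P q).continuous 0 1
    simp only [hκ, Finset.sum_sub_distrib, ← Finset.sum_mul, hstiff, hψt, hunity, one_mul,
      sub_zero]
  calc ∑ p, ψt p • qhat p = ∑ p, ∑ q, κ p q • qhat q := by
        simp only [Finset.sum_sum_smul_comm, hcol]
    _ = ∑ p, (ψ p • u + w p • F p) := Finset.sum_congr rfl fun p _ => hsys p
    _ = u + ∑ p, w p • F p := by
        rw [Finset.sum_add_distrib, ← Finset.sum_smul]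
        simp only [hψ, hunity, one_smul]

/-- If the coefficients q̂ solve the local DG predictor system
Σ_q κ_{pq} q̂_q = ψ_p uₙ + w_p F_p, then the local solution at the right
endpoint equals the quadrature update: Σ_p ψ̃_p q̂_p = uₙ + Σ_p w_p F_p. -/
theorem aderdg_right_endpoint_eq_quadrature_update
    (N D : ℕ) (τ : Fin (N + 1) → ℝ) (hτ : Function.Injective τ)
    (φ : Fin (N + 1) → ℝ → ℝ)
    (hφ : ∀ p x, φ p x = ∏ k ∈ Finset.univ.erase p, (x - τ k) / (τ p - τ k))
    (ψ ψt w : Fin (N + 1) → ℝ)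
    (hψ : ∀ p, ψ p = φ p 0) (hψt : ∀ p, ψt p = φ p 1)
    (hw : ∀ p, w p = ∫ x in (0:ℝ)..1, φ p x)
    (κ : Matrix (Fin (N + 1)) (Fin (N + 1)) ℝ)
    (hκ : ∀ p q, κ p q = ψt p * ψt q - ∫ x in (0:ℝ)..1, deriv (φ p) x * φ q x)
    (u : Fin D → ℝ) (qhat F : Fin (N + 1) → Fin D → ℝ)
    (hsys : ∀ p, ∑ q, κ p q • qhat q = ψ p • u + w p • F p) :
    ∑ p, ψt p • qhat p = u + ∑ p, w p • F p :=
  aderdg_right_endpoint_eq_quadrature_update_general N D τ hτ φ hφ ψ ψt w hψ hψt κ hκ u qhat F hsys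
end

section
/- Let N ≥ 1, assume the Gauss–Legendre quadrature property and that κ is invertible. Let f be a real polynomial with deg f ≤ N − 1, let u₀ ∈ ℝ, and let u(τ) = u₀ + ∫₀^τ f(s) ds be the exact solution of the ODE u′ = f(τ), u(0) = u₀. Then the vector q̂ with entries q̂_p = u(τ_p) is the unique solution of the local DG predictor system Σ_{q=0}^{N} κ_{pq} q̂_q = ψ_p u₀ + w_p f(τ_p) (0 ≤ p ≤ N), and consequently the local DG solution Σ_{p=0}^{N} q̂_p φ_p(τ) equals u(τ) identically: the local DG predictor is exact for polynomial right-hand sides of degree less than N. -/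
/-!
The exact solution `u = u₀ + ∫ f` is a polynomial of degree `≤ N`, so Lagrange interpolation
at the `N + 1` nodes reproduces it. Hence `∑ q κ p q u(τ q)` is the upwind form
`φ_p(1) u(1) - ∫ φ_p' u`, which integration by parts turns into `φ_p(0) u₀ + ∫ φ_p f`. The
integrand `φ_p f` has degree `≤ 2N - 1`, so the quadrature rule evaluates the integral exactly
as `w_p f(τ_p)`. Uniqueness is the invertibility of `κ`.
-/

open Finset Polynomial

namespace Polynomial

variable {K : Type*} [Field K]

noncomputable def antideriv (f : K[X]) : K[X] :=
  f.sum fun n a => C (a / (n + 1)) * X ^ (n + 1)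

theorem derivative_antideriv [CharZero K] (f : K[X]) : (antideriv f).derivative = f := by
  rw [antideriv, Polynomial.sum, derivative_sum]
  conv_rhs => rw [f.as_sum_support]
  refine sum_congr rfl fun n _ => ?_
  rw [derivative_C_mul, derivative_X_pow, ← C_mul_X_pow_eq_monomial, ← mul_assoc, ← C_mul,
    Nat.cast_add_one, div_mul_cancel₀ _ (Nat.cast_add_one_ne_zero n), Nat.add_sub_cancel]

theorem antideriv_eval_zero (f : K[X]) : (antideriv f).eval 0 = 0 := by
  simp [antideriv, Polynomial.sum, eval_finsetSum]

theorem natDegree_antideriv_le (f : K[X]) : (antideriv f).natDegree ≤ f.natDegree + 1 :=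
  natDegree_sum_le_of_forall_le _ _ fun n hn =>
    (natDegree_C_mul_le _ _).trans <| (natDegree_X_pow_le _).trans <|
      Nat.succ_le_succ (le_natDegree_of_mem_supp n hn)

theorem natDegree_C_add_antideriv_le (a : K) (f : K[X]) :
    (C a + antideriv f).natDegree ≤ f.natDegree + 1 :=
  natDegree_add_le_of_degree_le ((natDegree_C a).trans_le (Nat.zero_le _))
    (natDegree_antideriv_le f)

theorem integral_eval_derivative (p : ℝ[X]) (a b : ℝ) :
    ∫ x in a..b, p.derivative.eval x = p.eval b - p.eval a :=
  intervalIntegral.integral_eq_sub_of_hasDerivAt (fun x _ => p.hasDerivAt x)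
    (p.derivative.continuous.intervalIntegrable _ _)

end Polynomial

/-- Upwind flux at `b`; the predictor matrix is `κ p q = upwindForm 0 1 φ_p φ_q`. -/
noncomputable def upwindForm (a b : ℝ) (Q : ℝ[X]) : ℝ[X] →ₗ[ℝ] ℝ where
  toFun R := Q.eval b * R.eval b - ∫ x in a..b, Q.derivative.eval x * R.eval x
  map_add' R S := by
    have hint : ∀ T : ℝ[X],
        IntervalIntegrable (fun x => Q.derivative.eval x * T.eval x) MeasureTheory.volume a b :=
      fun T => (Q.derivative.continuous.mul T.continuous).intervalIntegrable _ _
    simp only [eval_add, mul_add, intervalIntegral.integral_add (hint R) (hint S)]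
    ring
  map_smul' c R := by
    simp only [eval_smul, smul_eq_mul, RingHom.id_apply, mul_left_comm _ c,
      intervalIntegral.integral_const_mul]
    ring

theorem upwindForm_apply (a b : ℝ) (Q R : ℝ[X]) :
    upwindForm a b Q R = Q.eval b * R.eval b - ∫ x in a..b, Q.derivative.eval x * R.eval x :=
  rfl

theorem upwindForm_eq_integral_mul_derivative (a b : ℝ) (Q R : ℝ[X]) :
    upwindForm a b Q R = Q.eval a * R.eval a + ∫ x in a..b, Q.eval x * R.derivative.eval x := by
  rw [upwindForm_apply, intervalIntegral.integral_mul_deriv_eq_deriv_mul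
    (fun x _ => Q.hasDerivAt x) (fun x _ => R.hasDerivAt x)
    (Q.derivative.continuous.intervalIntegrable _ _)
    (R.derivative.continuous.intervalIntegrable _ _)]
  ring

namespace Lagrange

variable {ι : Type*} [DecidableEq ι]

theorem eval_basis {F : Type*} [Field F] (s : Finset ι) (v : ι → F) (i : ι) (x : F) :
    (Lagrange.basis s v i).eval x = ∏ j ∈ s.erase i, (x - v j) / (v i - v j) := by
  simp only [Lagrange.basis, basisDivisor, eval_prod, eval_mul, eval_sub, eval_C, eval_X,
    div_eq_inv_mul]

variable [Fintype ι]

theorem sum_map_basis_mul_eval {F : Type*} [Field F] {v : ι → F} (hv : Function.Injective v)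
    (L : F[X] →ₗ[F] F) {g : F[X]} (hg : g.degree < Fintype.card ι) :
    ∑ i, L (Lagrange.basis univ v i) * g.eval (v i) = L g := by
  conv_rhs => rw [eq_interpolate hv.injOn hg]
  rw [interpolate_apply, map_sum]
  refine sum_congr rfl fun i _ => ?_
  rw [← smul_eq_C_mul, map_smul, smul_eq_mul, mul_comm]

theorem integral_eval_basis_mul {v : ι → ℝ} (hv : Function.Injective v) {w : ι → ℝ}
    {a b : ℝ} {M : ℕ}
    (hquad : ∀ g : ℝ[X], g.natDegree ≤ M →
      ∫ x in a..b, g.eval x = ∑ j, w j * g.eval (v j))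
    {i : ι} {g : ℝ[X]} (hg : (Lagrange.basis univ v i * g).natDegree ≤ M) :
    ∫ x in a..b, (Lagrange.basis univ v i).eval x * g.eval x = w i * g.eval (v i) := by
  simp_rw [← eval_mul, hquad _ hg]
  rw [sum_eq_single i]
  · rw [eval_mul, eval_basis_self hv.injOn (mem_univ i), one_mul]
  · intro j _ hji
    rw [eval_mul, eval_basis_of_ne hji.symm (mem_univ j), zero_mul, mul_zero]
  · exact fun h => absurd (mem_univ i) h

end Lagrange

theorem aderdg_local_predictor_exact_for_low_degree_general
    (N : ℕ) (hN : 1 ≤ N) (τ : Fin (N + 1) → ℝ) (hτ : Function.Injective τ)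
    (φ : Fin (N + 1) → ℝ → ℝ)
    (hφ : ∀ p x, φ p x = ∏ k ∈ Finset.univ.erase p, (x - τ k) / (τ p - τ k))
    (ψ ψt w : Fin (N + 1) → ℝ)
    (hψ : ∀ p, ψ p = φ p 0) (hψt : ∀ p, ψt p = φ p 1)
    (κ : Matrix (Fin (N + 1)) (Fin (N + 1)) ℝ)
    (hκ : ∀ p q, κ p q = ψt p * ψt q - ∫ x in (0:ℝ)..1, deriv (φ p) x * φ q x)
    (hGL : ∀ g : Polynomial ℝ, g.natDegree ≤ 2 * N + 1 →
      (∫ x in (0:ℝ)..1, g.eval x) = ∑ p, w p * g.eval (τ p))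
    (hinv : IsUnit κ.det)
    (f : Polynomial ℝ) (hf : f.natDegree ≤ N - 1)
    (u₀ : ℝ) (u : ℝ → ℝ)
    (hu : ∀ t, u t = u₀ + ∫ s in (0:ℝ)..t, f.eval s) :
    (∀ p, ∑ q, κ p q * u (τ q) = ψ p * u₀ + w p * f.eval (τ p)) ∧
      (∀ v : Fin (N + 1) → ℝ,
        (∀ p, ∑ q, κ p q * v q = ψ p * u₀ + w p * f.eval (τ p)) →
        v = fun p => u (τ p)) ∧
      (∀ x : ℝ, ∑ p, u (τ p) * φ p x = u x) := by
  set U := C u₀ + antideriv f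
  have hU' : U.derivative = f := by simp [U, derivative_antideriv]
  have hU0 : U.eval 0 = u₀ := by simp [U, antideriv_eval_zero]
  have hUdeg : U.degree < Fintype.card (Fin (N + 1)) := by
    have : U.natDegree ≤ f.natDegree + 1 := natDegree_C_add_antideriv_le u₀ f
    rw [Fintype.card_fin]
    exact degree_le_natDegree.trans_lt (by exact_mod_cast (by omega : U.natDegree < N + 1))
  have hPf : ∀ p, (Lagrange.basis univ τ p * f).natDegree ≤ 2 * N + 1 := fun p => by
    have := Lagrange.natDegree_basis hτ.injOn (mem_univ p)
    have := natDegree_mul_le (p := Lagrange.basis univ τ p) (q := f)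
    simp_all only [card_univ, Fintype.card_fin]
    omega
  obtain rfl : φ = fun p x => (Lagrange.basis univ τ p).eval x := by
    ext p x; rw [hφ, Lagrange.eval_basis]
  obtain rfl : u = fun t => U.eval t := by
    ext t; rw [hu, ← hU', integral_eval_derivative, hU0]; ring
  have hconsistent : ∀ p, ∑ q, κ p q * U.eval (τ q) = ψ p * u₀ + w p * f.eval (τ p) := by
    intro p
    have hκ' : ∀ q,
        κ p q = upwindForm 0 1 (Lagrange.basis univ τ p) (Lagrange.basis univ τ q) := by
      simp [hκ, hψt, upwindForm_apply, Polynomial.deriv]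
    simp_rw [hκ', Lagrange.sum_map_basis_mul_eval hτ _ hUdeg,
      upwindForm_eq_integral_mul_derivative, hU', hU0,
      Lagrange.integral_eval_basis_mul hτ hGL (hPf p), hψ]
  have hκ_inj : Function.Injective κ.mulVec :=
    Matrix.mulVec_injective_iff_isUnit.mpr ((Matrix.isUnit_iff_isUnit_det κ).mpr hinv)
  refine ⟨hconsistent, fun v hv => hκ_inj (funext fun p => (hv p).trans (hconsistent p).symm),
    fun x => ?_⟩
  simpa [mul_comm] using Lagrange.sum_map_basis_mul_eval hτ (leval x) hUdeg

/-- For a polynomial right-hand side f of degree ≤ N−1 (N ≥ 1),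
the vector of exact-solution values at the nodes is the unique solution of
the local DG predictor system, and the local DG solution coincides with the
exact solution: the local DG predictor is exact. -/
theorem aderdg_local_predictor_exact_for_low_degree
    (N : ℕ) (hN : 1 ≤ N) (τ : Fin (N + 1) → ℝ) (hτ : Function.Injective τ)
    (hτ01 : ∀ p, τ p ∈ Set.Icc (0:ℝ) 1)
    (φ : Fin (N + 1) → ℝ → ℝ)
    (hφ : ∀ p x, φ p x = ∏ k ∈ Finset.univ.erase p, (x - τ k) / (τ p - τ k))
    (ψ ψt w : Fin (N + 1) → ℝ)
    (hψ : ∀ p, ψ p = φ p 0) (hψt : ∀ p, ψt p = φ p 1)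
    (hw : ∀ p, w p = ∫ x in (0:ℝ)..1, φ p x)
    (κ : Matrix (Fin (N + 1)) (Fin (N + 1)) ℝ)
    (hκ : ∀ p q, κ p q = ψt p * ψt q - ∫ x in (0:ℝ)..1, deriv (φ p) x * φ q x)
    (hGL : ∀ g : Polynomial ℝ, g.natDegree ≤ 2 * N + 1 →
      (∫ x in (0:ℝ)..1, g.eval x) = ∑ p, w p * g.eval (τ p))
    (hinv : IsUnit κ.det)
    (f : Polynomial ℝ) (hf : f.natDegree ≤ N - 1)
    (u₀ : ℝ) (u : ℝ → ℝ)
    (hu : ∀ t, u t = u₀ + ∫ s in (0:ℝ)..t, f.eval s) :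
    (∀ p, ∑ q, κ p q * u (τ q) = ψ p * u₀ + w p * f.eval (τ p)) ∧
      (∀ v : Fin (N + 1) → ℝ,
        (∀ p, ∑ q, κ p q * v q = ψ p * u₀ + w p * f.eval (τ p)) →
        v = fun p => u (τ p)) ∧
      (∀ x : ℝ, ∑ p, u (τ p) * φ p x = u x) :=
  aderdg_local_predictor_exact_for_low_degree_general N hN τ hτ φ hφ ψ ψt w hψ hψt κ hκ hGL hinv f
    hf u₀ u hu
end

section
/- (Algebraic stability of the IRK-GL-ADER-DG method.) Assume κ is invertible and every weight w_p is nonzero, let μ = diag(w_0,…,w_N) and a = κ⁻¹ μ. Then the algebraic-stability matrix M := μ a + aᵀ μ − w wᵀ equals the dyadic square (aᵀψ)(aᵀψ)ᵀ, i.e. M_{pq} = (Σ_i a_{ip} ψ_i)(Σ_j a_{jq} ψ_j) for all p, q. In particular M is symmetric positive semidefinite. -/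
/-!
Write `P_p` for the Lagrange basis polynomials. Integration by parts gives
`κ + κᵀ = ψ̃ ψ̃ᵀ + ψ ψᵀ`, and since `∑ P_p = 1` the column sums of `κ` are `ψ̃`. From
`κ a = μ` these give `μ a = aᵀ κᵀ a`, `aᵀ μ = aᵀ κ a` and `aᵀ ψ̃ = w`, hence
`μ a + aᵀ μ - w wᵀ = aᵀ (κ + κᵀ) a - w wᵀ = (aᵀ ψ)(aᵀ ψ)ᵀ`.
-/

open Polynomial Matrix intervalIntegral

theorem Lagrange.eval_basis_s11 {F ι : Type*} [Field F] [DecidableEq ι] (s : Finset ι) (v : ι → F)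
    (i : ι) (x : F) :
    (Lagrange.basis s v i).eval x = ∏ j ∈ s.erase i, (x - v j) / (v i - v j) := by
  simp only [Lagrange.basis, Lagrange.basisDivisor, eval_prod, eval_mul, eval_C, eval_sub, eval_X]
  exact Finset.prod_congr rfl fun _ _ => inv_mul_eq_div _ _

namespace Polynomial

theorem integral_derivative_mul_add_integral_derivative_mul (p q : ℝ[X]) (a b : ℝ) :
    (∫ x in a..b, p.derivative.eval x * q.eval x) + ∫ x in a..b, q.derivative.eval x * p.eval x
      = p.eval b * q.eval b - p.eval a * q.eval a := by
  rw [← integral_add ((by fun_prop : Continuous _).intervalIntegrable _ _)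
    ((by fun_prop : Continuous _).intervalIntegrable _ _)]
  rw [← integral_deriv_mul_eq_sub (fun x _ => p.hasDerivAt x) (fun x _ => q.hasDerivAt x)
    ((by fun_prop : Continuous _).intervalIntegrable _ _)
    ((by fun_prop : Continuous _).intervalIntegrable _ _)]
  exact integral_congr fun x _ => by ring

theorem sum_integral_derivative_mul_eq_zero {ι : Type*} {s : Finset ι} {P : ι → ℝ[X]}
    (hP : ∑ i ∈ s, P i = 1) (q : ℝ[X]) (a b : ℝ) :
    ∑ i ∈ s, ∫ x in a..b, (P i).derivative.eval x * q.eval x = 0 := by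
  rw [← integral_finsetSum fun i _ => (by fun_prop : Continuous _).intervalIntegrable _ _]
  simp_rw [← Finset.sum_mul, ← eval_finsetSum, ← derivative_sum, hP, derivative_one, eval_zero,
    zero_mul, integral_zero]

end Polynomial

noncomputable def aderdgKappa {ι : Type*} (P : ι → ℝ[X]) : Matrix ι ι ℝ :=
  of fun p q =>
    (P p).eval 1 * (P q).eval 1 - ∫ x in (0 : ℝ)..1, (P p).derivative.eval x * (P q).eval x

section aderdgKappa

variable {ι : Type*} (P : ι → ℝ[X])

theorem aderdgKappa_add_transpose :
    aderdgKappa P + (aderdgKappa P)ᵀ =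
      vecMulVec (fun p => (P p).eval 1) (fun p => (P p).eval 1) +
        vecMulVec (fun p => (P p).eval 0) (fun p => (P p).eval 0) := by
  ext p q
  have := integral_derivative_mul_add_integral_derivative_mul (P p) (P q) 0 1
  simp only [Matrix.add_apply, transpose_apply, aderdgKappa, of_apply, vecMulVec_apply]
  linarith

theorem one_vecMul_aderdgKappa [Fintype ι] (hP : ∑ p, P p = 1) :
    1 ᵥ* aderdgKappa P = fun q => (P q).eval 1 := by
  ext q
  have hP1 : ∑ p, (P p).eval 1 = 1 := by rw [← eval_finsetSum, hP, eval_one]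
  simp only [vecMul, dotProduct, Pi.one_apply, one_mul, aderdgKappa, of_apply,
    Finset.sum_sub_distrib, ← Finset.sum_mul, hP1, sum_integral_derivative_mul_eq_zero hP]
  ring

end aderdgKappa

def algebraicStabilityMatrix {R n : Type*} [CommRing R] [Fintype n] [DecidableEq n]
    (a : Matrix n n R) (w : n → R) : Matrix n n R :=
  diagonal w * a + aᵀ * diagonal w - vecMulVec w w

theorem transpose_mul_vecMulVec_mul {R n : Type*} [CommRing R] [Fintype n] (a : Matrix n n R)
    (u : n → R) : aᵀ * vecMulVec u u * a = vecMulVec (aᵀ *ᵥ u) (aᵀ *ᵥ u) := by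
  rw [mul_vecMulVec, vecMulVec_mul, ← mulVec_transpose]

theorem algebraicStabilityMatrix_eq_vecMulVec {R n : Type*} [CommRing R] [Fintype n]
    [DecidableEq n] {κ a : Matrix n n R} {w ψ ψt : n → R} (hκa : κ * a = diagonal w)
    (hsymm : κ + κᵀ = vecMulVec ψt ψt + vecMulVec ψ ψ) (hcol : 1 ᵥ* κ = ψt) :
    algebraicStabilityMatrix a w = vecMulVec (aᵀ *ᵥ ψ) (aᵀ *ᵥ ψ) := by
  have hw : aᵀ *ᵥ ψt = w := by
    ext i
    rw [mulVec_transpose, ← hcol, vecMul_vecMul, hκa, vecMul_diagonal, Pi.one_apply, one_mul]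
  have hsplit : diagonal w * a + aᵀ * diagonal w = aᵀ * (κ + κᵀ) * a := by
    nth_rw 1 [← diagonal_transpose w]
    rw [← hκa, transpose_mul, Matrix.mul_add, Matrix.add_mul, Matrix.mul_assoc aᵀ κ a, add_comm]
  rw [algebraicStabilityMatrix, hsplit, hsymm, Matrix.mul_add, Matrix.add_mul,
    transpose_mul_vecMulVec_mul, transpose_mul_vecMulVec_mul, hw, add_sub_cancel_left]

theorem posSemidef_vecMulVec_self {n : Type*} [Fintype n] (v : n → ℝ) :
    (vecMulVec v v).PosSemidef := by
  simpa using posSemidef_vecMulVec_self_star v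

theorem aderdg_algebraic_stability_general
    (N : ℕ) (τ : Fin (N + 1) → ℝ) (hτ : Function.Injective τ)
    (φ : Fin (N + 1) → ℝ → ℝ)
    (hφ : ∀ p x, φ p x = ∏ k ∈ Finset.univ.erase p, (x - τ k) / (τ p - τ k))
    (ψ ψt w : Fin (N + 1) → ℝ)
    (hψ : ∀ p, ψ p = φ p 0) (hψt : ∀ p, ψt p = φ p 1)
    (κ : Matrix (Fin (N + 1)) (Fin (N + 1)) ℝ)
    (hκ : ∀ p q, κ p q = ψt p * ψt q - ∫ x in (0:ℝ)..1, deriv (φ p) x * φ q x)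
    (hinv : IsUnit κ.det)
    (μ a M : Matrix (Fin (N + 1)) (Fin (N + 1)) ℝ)
    (hμ : μ = Matrix.diagonal w)
    (ha : a = κ⁻¹ * μ)
    (hM : M = μ * a + aᵀ * μ - Matrix.vecMulVec w w) :
    (∀ p q, M p q = (∑ i, a i p * ψ i) * (∑ j, a j q * ψ j)) ∧
      M = Matrix.vecMulVec (aᵀ.mulVec ψ) (aᵀ.mulVec ψ) ∧
      M.IsSymm ∧ M.PosSemidef := by
  set P := Lagrange.basis Finset.univ τ
  have hφP : ∀ p, φ p = fun x => (P p).eval x :=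
    fun p => funext fun x => by rw [hφ, Lagrange.eval_basis_s11]
  have hψP : ψ = fun p => (P p).eval 0 := funext fun p => by rw [hψ, hφP]
  have hψtP : ψt = fun p => (P p).eval 1 := funext fun p => by rw [hψt, hφP]
  have hκP : κ = aderdgKappa P := by
    ext p q
    simp only [hκ, hψtP, hφP, Polynomial.deriv, aderdgKappa, of_apply]
  have hκa : κ * a = diagonal w := by
    rw [ha, hμ, ← Matrix.mul_assoc, mul_nonsing_inv κ hinv, Matrix.one_mul]
  have hMv : M = vecMulVec (aᵀ *ᵥ ψ) (aᵀ *ᵥ ψ) := by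
    rw [hM, hμ, hψP]
    exact algebraicStabilityMatrix_eq_vecMulVec hκa (hκP ▸ aderdgKappa_add_transpose P)
      (hκP ▸ one_vecMul_aderdgKappa P (Lagrange.sum_basis hτ.injOn Finset.univ_nonempty))
  refine ⟨fun p q => ?_, hMv, hMv ▸ transpose_vecMulVec _ _, hMv ▸ posSemidef_vecMulVec_self _⟩
  simp only [hMv, vecMulVec_apply, mulVec_transpose, vecMul, dotProduct, mul_comm]

/-- Algebraic stability of the IRK-GL-ADER-DG method: the matrix
M = μa + aᵀμ − w wᵀ equals the dyadic square (aᵀψ)(aᵀψ)ᵀ, and in particular M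
is symmetric positive semidefinite. -/
theorem aderdg_algebraic_stability
    (N : ℕ) (τ : Fin (N + 1) → ℝ) (hτ : Function.Injective τ)
    (φ : Fin (N + 1) → ℝ → ℝ)
    (hφ : ∀ p x, φ p x = ∏ k ∈ Finset.univ.erase p, (x - τ k) / (τ p - τ k))
    (ψ ψt w : Fin (N + 1) → ℝ)
    (hψ : ∀ p, ψ p = φ p 0) (hψt : ∀ p, ψt p = φ p 1)
    (hw : ∀ p, w p = ∫ x in (0:ℝ)..1, φ p x)
    (κ : Matrix (Fin (N + 1)) (Fin (N + 1)) ℝ)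
    (hκ : ∀ p q, κ p q = ψt p * ψt q - ∫ x in (0:ℝ)..1, deriv (φ p) x * φ q x)
    (hinv : IsUnit κ.det) (hwne : ∀ p, w p ≠ 0)
    (μ a M : Matrix (Fin (N + 1)) (Fin (N + 1)) ℝ)
    (hμ : μ = Matrix.diagonal w)
    (ha : a = κ⁻¹ * μ)
    (hM : M = μ * a + aᵀ * μ - Matrix.vecMulVec w w) :
    (∀ p q, M p q = (∑ i, a i p * ψ i) * (∑ j, a j q * ψ j)) ∧
      M = Matrix.vecMulVec (aᵀ.mulVec ψ) (aᵀ.mulVec ψ) ∧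
      M.IsSymm ∧ M.PosSemidef :=
  aderdg_algebraic_stability_general N τ hτ φ hφ ψ ψt w hψ hψt κ hκ hinv μ a M hμ ha hM
end

section
/- Assume κ is invertible and every weight w_p is nonzero, let μ = diag(w_0,…,w_N) and a = κ⁻¹ μ. Then the algebraic-stability matrix M := μ a + aᵀ μ − w wᵀ has rank exactly 1; equivalently, the vector aᵀψ is nonzero (so in the general case the local DG solution satisfies q_n(0) ≠ u_n). -/
/-!
Integration by parts gives `κ + κᵀ = ψ̃ ψ̃ᵀ + ψ ψᵀ`, and since the Lagrange basis is a partition of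
unity, `κ 𝟙 = ψ`. With `B = μ κ⁻¹` one has `μ a + aᵀ μ = B (κ + κᵀ) Bᵀ` and `B ψ = μ 𝟙 = w`, so
`M = (B ψ̃)(B ψ̃)ᵀ`. This has rank one because `B` is invertible and the entries of `ψ̃` sum to `1`;
likewise `aᵀ` is invertible and `ψ ≠ 0`.
-/

open Matrix Polynomial

namespace Matrix

theorem rank_vecMulVec_of_ne_zero {n K : Type*} [Fintype n] [Field K] {u v : n → K}
    (hu : u ≠ 0) (hv : v ≠ 0) : (vecMulVec u v).rank = 1 := by
  classical
  refine le_antisymm (rank_vecMulVec_le u v) (Nat.one_le_iff_ne_zero.mpr fun h => ?_)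
  have hlin : (vecMulVec u v).mulVecLin = 0 := by
    rwa [rank, Submodule.finrank_eq_zero, LinearMap.range_eq_bot] at h
  refine vecMulVec_ne_zero hu hv (ext fun i j => ?_)
  simpa using congrFun (LinearMap.congr_fun hlin (Pi.single j 1)) i

variable {n R : Type*} [Fintype n] [CommRing R]

theorem mul_vecMulVec_mul_transpose {m : Type*} (A : Matrix m n R) (x y : n → R) :
    A * vecMulVec x y * Aᵀ = vecMulVec (A *ᵥ x) (A *ᵥ y) := by
  rw [mul_vecMulVec, vecMulVec_mul, vecMul_transpose]

variable [DecidableEq n]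

theorem mul_inv_mul_add_transpose_mul (κ μ : Matrix n n R) (hκ : IsUnit κ.det) (hμ : μᵀ = μ) :
    μ * (κ⁻¹ * μ) + (κ⁻¹ * μ)ᵀ * μ = μ * κ⁻¹ * (κ + κᵀ) * (μ * κ⁻¹)ᵀ := by
  have hκT : κᵀ * κ⁻¹ᵀ = 1 := by rw [← transpose_mul, nonsing_inv_mul κ hκ, transpose_one]
  rw [transpose_mul, transpose_mul, hμ, Matrix.mul_add, Matrix.add_mul]
  simp only [Matrix.mul_assoc, nonsing_inv_mul_cancel_left κ _ hκ]
  rw [← Matrix.mul_assoc κᵀ, hκT, Matrix.one_mul, add_comm]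

theorem diagonal_mul_inv_add_transpose_sub_vecMulVec (κ : Matrix n n R) (hκ : IsUnit κ.det)
    (u v w : n → R) (hsym : κ + κᵀ = vecMulVec u u + vecMulVec v v) (hv : κ *ᵥ 1 = v) :
    diagonal w * (κ⁻¹ * diagonal w) + (κ⁻¹ * diagonal w)ᵀ * diagonal w - vecMulVec w w
      = vecMulVec ((diagonal w * κ⁻¹) *ᵥ u) ((diagonal w * κ⁻¹) *ᵥ u) := by
  have hw : (diagonal w * κ⁻¹) *ᵥ v = w := by
    rw [← hv, mulVec_mulVec, Matrix.mul_assoc, nonsing_inv_mul κ hκ, Matrix.mul_one]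
    ext i; simp [mulVec, dotProduct, diagonal_apply]
  rw [mul_inv_mul_add_transpose_mul κ _ hκ (diagonal_transpose w), hsym, Matrix.mul_add,
    Matrix.add_mul, mul_vecMulVec_mul_transpose, mul_vecMulVec_mul_transpose,
    hw, add_sub_cancel_right]

end Matrix

theorem Polynomial.integral_derivative_eval (Q : ℝ[X]) (a b : ℝ) :
    ∫ x in a..b, Q.derivative.eval x = Q.eval b - Q.eval a :=
  intervalIntegral.integral_eq_sub_of_hasDerivAt (fun x _ => Q.hasDerivAt x)
    (Q.derivative.continuous.intervalIntegrable _ _)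

theorem Lagrange.eval_basis_eq_prod_s12 {ι F : Type*} [DecidableEq ι] [Field F] (s : Finset ι)
    (v : ι → F) (i : ι) (x : F) :
    (Lagrange.basis s v i).eval x = ∏ j ∈ s.erase i, (x - v j) / (v i - v j) := by
  simp only [Lagrange.basis, eval_prod, Lagrange.basisDivisor, eval_mul, eval_C, eval_sub, eval_X]
  exact Finset.prod_congr rfl fun j _ => by rw [div_eq_inv_mul]

section Kappa

variable {ι : Type*}

/-- The matrix `κ`, for an arbitrary family of polynomials in place of the Lagrange basis. -/
noncomputable def kappaMatrix (P : ι → ℝ[X]) : Matrix ι ι ℝ :=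
  of fun p q =>
    (P p).eval 1 * (P q).eval 1 - ∫ x in (0:ℝ)..1, (P p).derivative.eval x * (P q).eval x

theorem kappaMatrix_add_transpose (P : ι → ℝ[X]) :
    kappaMatrix P + (kappaMatrix P)ᵀ =
      vecMulVec (fun p => (P p).eval 1) (fun p => (P p).eval 1) +
        vecMulVec (fun p => (P p).eval 0) (fun p => (P p).eval 0) := by
  ext p q
  have hparts : (∫ x in (0:ℝ)..1, (P p).derivative.eval x * (P q).eval x) +
      ∫ x in (0:ℝ)..1, (P q).derivative.eval x * (P p).eval x =
      (P p).eval 1 * (P q).eval 1 - (P p).eval 0 * (P q).eval 0 := by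
    rw [← intervalIntegral.integral_add (Continuous.intervalIntegrable (by fun_prop) _ _)
      (Continuous.intervalIntegrable (by fun_prop) _ _)]
    simpa [derivative_mul, add_comm, mul_comm] using integral_derivative_eval (P p * P q) 0 1
  simp only [Matrix.add_apply, transpose_apply, kappaMatrix, of_apply, vecMulVec_apply]
  linarith

theorem sum_eval_eq_one [Fintype ι] {P : ι → ℝ[X]} (hP : ∑ p, P p = 1) (x : ℝ) :
    ∑ p, (P p).eval x = 1 := by
  rw [← eval_finsetSum, hP, eval_one]

theorem kappaMatrix_mulVec_one [Fintype ι] {P : ι → ℝ[X]} (hP : ∑ p, P p = 1) :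
    kappaMatrix P *ᵥ 1 = fun p => (P p).eval 0 := by
  ext p
  have hrow : ∑ q, ∫ x in (0:ℝ)..1, (P p).derivative.eval x * (P q).eval x =
      (P p).eval 1 - (P p).eval 0 := by
    rw [← intervalIntegral.integral_finsetSum fun q _ =>
      Continuous.intervalIntegrable (by fun_prop) _ _]
    simp_rw [← Finset.mul_sum, sum_eval_eq_one hP, mul_one]
    exact integral_derivative_eval _ 0 1
  simp only [mulVec, dotProduct, kappaMatrix, of_apply, Pi.one_apply, mul_one,
    Finset.sum_sub_distrib, ← Finset.mul_sum, sum_eval_eq_one hP, hrow]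
  ring

end Kappa

theorem aderdg_M_rank_one_general
    (N : ℕ) (τ : Fin (N + 1) → ℝ) (hτ : Function.Injective τ)
    (φ : Fin (N + 1) → ℝ → ℝ)
    (hφ : ∀ p x, φ p x = ∏ k ∈ Finset.univ.erase p, (x - τ k) / (τ p - τ k))
    (ψ ψt w : Fin (N + 1) → ℝ)
    (hψ : ∀ p, ψ p = φ p 0) (hψt : ∀ p, ψt p = φ p 1)
    (κ : Matrix (Fin (N + 1)) (Fin (N + 1)) ℝ)
    (hκ : ∀ p q, κ p q = ψt p * ψt q - ∫ x in (0:ℝ)..1, deriv (φ p) x * φ q x)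
    (hinv : IsUnit κ.det) (hwne : ∀ p, w p ≠ 0)
    (μ a M : Matrix (Fin (N + 1)) (Fin (N + 1)) ℝ)
    (hμ : μ = Matrix.diagonal w)
    (ha : a = κ⁻¹ * μ)
    (hM : M = μ * a + aᵀ * μ - Matrix.vecMulVec w w) :
    M.rank = 1 ∧ aᵀ.mulVec ψ ≠ 0 := by
  set P := Lagrange.basis Finset.univ τ
  have hPsum : ∑ p, P p = 1 := Lagrange.sum_basis hτ.injOn Finset.univ_nonempty
  obtain rfl : φ = fun p x => (P p).eval x := by
    ext p x; rw [hφ, Lagrange.eval_basis_eq_prod_s12]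
  obtain rfl : ψ = fun p => (P p).eval 0 := funext hψ
  obtain rfl : ψt = fun p => (P p).eval 1 := funext hψt
  obtain rfl : κ = kappaMatrix P := by
    ext p q; simp only [hκ, kappaMatrix, of_apply, Polynomial.deriv]
  have hψt_ne : (fun p => (P p).eval 1) ≠ 0 := fun h => by
    simpa [h] using sum_eval_eq_one hPsum 1
  have hψ_ne : (fun p => (P p).eval 0) ≠ 0 := fun h => by
    simpa [h] using sum_eval_eq_one hPsum 0
  have hdet : (diagonal w * (kappaMatrix P)⁻¹).det ≠ 0 := by
    rw [det_mul, det_diagonal]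
    exact mul_ne_zero (Finset.prod_ne_zero_iff.mpr fun p _ => hwne p)
      (isUnit_nonsing_inv_det _ hinv).ne_zero
  subst hμ ha hM
  refine ⟨?_, ?_⟩
  · rw [diagonal_mul_inv_add_transpose_sub_vecMulVec _ hinv _ _ w (kappaMatrix_add_transpose P)
      (kappaMatrix_mulVec_one hPsum)]
    have hu := mt (eq_zero_of_mulVec_eq_zero hdet) hψt_ne
    exact rank_vecMulVec_of_ne_zero hu hu
  · refine mt (eq_zero_of_mulVec_eq_zero ?_) hψ_ne
    rw [det_transpose, det_mul, mul_comm, ← det_mul]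
    exact hdet

/-- The algebraic-stability matrix M = μa + aᵀμ − w wᵀ has rank
exactly 1; equivalently, the vector aᵀψ is nonzero. -/
theorem aderdg_M_rank_one
    (N : ℕ) (τ : Fin (N + 1) → ℝ) (hτ : Function.Injective τ)
    (φ : Fin (N + 1) → ℝ → ℝ)
    (hφ : ∀ p x, φ p x = ∏ k ∈ Finset.univ.erase p, (x - τ k) / (τ p - τ k))
    (ψ ψt w : Fin (N + 1) → ℝ)
    (hψ : ∀ p, ψ p = φ p 0) (hψt : ∀ p, ψt p = φ p 1)
    (hw : ∀ p, w p = ∫ x in (0:ℝ)..1, φ p x)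
    (κ : Matrix (Fin (N + 1)) (Fin (N + 1)) ℝ)
    (hκ : ∀ p q, κ p q = ψt p * ψt q - ∫ x in (0:ℝ)..1, deriv (φ p) x * φ q x)
    (hinv : IsUnit κ.det) (hwne : ∀ p, w p ≠ 0)
    (μ a M : Matrix (Fin (N + 1)) (Fin (N + 1)) ℝ)
    (hμ : μ = Matrix.diagonal w)
    (ha : a = κ⁻¹ * μ)
    (hM : M = μ * a + aᵀ * μ - Matrix.vecMulVec w w) :
    M.rank = 1 ∧ aᵀ.mulVec ψ ≠ 0 :=
  aderdg_M_rank_one_general N τ hτ φ hφ ψ ψt w hψ hψt κ hκ hinv hwne μ a M hμ ha hM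
end
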